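/- arXiv:2508.14678 — 2 statements merged into one kernel-verified Lean document; each statement's English description precedes it below -/
import Mathlib

section
/- Let G be a simple graph with n ≥ 3 vertices, m edges, and ordered degree sequence d_1 ≥ d_2 ≥ ... ≥ d_n. Then M_1(G) ≥ 4m²/n + (1/2)(d_1 − d_2)² + (2n/(n−2))·(2m/n − (d_1 + d_2)/2)². -/
/-!
Remove two vertices of degrees `d₁` and `d₂`. By Cauchy–Schwarz the remaining `n - 2` degrees,
which sum to `2m - d₁ - d₂`, have squares summing to at least `(2m - d₁ - d₂)² / (n - 2)`, and
`d₁² + d₂² + (2m - d₁ - d₂)² / (n - 2)` is exactly the right-hand side of the bound.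
-/

open Finset

lemma sq_add_sq_add_sq_div_eq {N a b T : ℝ} (hN : N ≠ 0) (hN2 : N - 2 ≠ 0) :
    a ^ 2 + b ^ 2 + T ^ 2 / (N - 2) =
      (a + b + T) ^ 2 / N + 1 / 2 * (a - b) ^ 2
        + 2 * N / (N - 2) * ((a + b + T) / N - (a + b) / 2) ^ 2 := by
  field_simp
  ring

lemma sum_eq_add_add_sum_erase_erase {ι M : Type*} [Fintype ι] [DecidableEq ι]
    [AddCommMonoid M] (f : ι → M) {a b : ι} (hab : a ≠ b) :
    ∑ i, f i = f a + f b + ∑ i ∈ (univ.erase a).erase b, f i := by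
  rw [← sum_erase_add univ f (mem_univ a),
    ← sum_erase_add _ f (mem_erase.2 ⟨hab.symm, mem_univ b⟩)]
  abel

lemma sq_sum_div_card_add_le_sum_sq {ι : Type*} [Fintype ι] [DecidableEq ι] (x : ι → ℝ)
    {a b : ι} (hab : a ≠ b) :
    (∑ i, x i) ^ 2 / Fintype.card ι + 1 / 2 * (x a - x b) ^ 2
        + 2 * Fintype.card ι / (Fintype.card ι - 2)
          * ((∑ i, x i) / Fintype.card ι - (x a + x b) / 2) ^ 2
      ≤ ∑ i, x i ^ 2 := by
  set s := (univ.erase a).erase b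
  set N : ℝ := (Fintype.card ι : ℝ)
  have hcard : (#s : ℝ) = N - 2 := by
    have h2 : 2 ≤ Fintype.card ι := Fintype.one_lt_card_iff.2 ⟨a, b, hab⟩
    rw [card_erase_of_mem (mem_erase.2 ⟨hab.symm, mem_univ b⟩), card_erase_of_mem (mem_univ a),
      card_univ, Nat.sub_sub, Nat.cast_sub h2]
    norm_num [N]
  have hCS : (∑ i ∈ s, x i) ^ 2 ≤ (N - 2) * ∑ i ∈ s, x i ^ 2 :=
    hcard ▸ sq_sum_le_card_mul_sum_sq
  rw [sum_eq_add_add_sum_erase_erase x hab, sum_eq_add_add_sum_erase_erase (x · ^ 2) hab]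
  rcases eq_or_ne (N - 2) 0 with hN2 | hN2
  -- With two points the last coefficient is `2 * 2 / 0 = 0`, and the bound is an identity.
  · have hrest : ∑ i ∈ s, x i = 0 := by
      rw [hN2, zero_mul] at hCS
      exact pow_eq_zero_iff two_ne_zero |>.1 (le_antisymm hCS (sq_nonneg _))
    have hN : N = 2 := by linarith
    rw [hrest, hN2, hN, div_zero, zero_mul, add_zero]
    nlinarith [sum_nonneg fun i (_ : i ∈ s) => sq_nonneg (x i)]
  · have hpos : 0 < N - 2 := lt_of_le_of_ne (hcard ▸ (#s).cast_nonneg) hN2.symm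
    rw [← sq_add_sq_add_sq_div_eq (by linarith : 0 < N).ne' hN2]
    gcongr _ + ?_
    exact (div_le_iff₀' hpos).2 hCS

theorem stmt7 (n : ℕ) (hn : 3 ≤ n) {V : Type*} [Fintype V] [DecidableEq V]
    (G : SimpleGraph V) [DecidableRel G.Adj]
    (m : ℕ) (hm : m = G.edgeFinset.card)
    (e : Fin n ≃ V) (d : Fin n → ℕ) (hd : ∀ i, d i = G.degree (e i)) :
    ∑ v : V, (G.degree v : ℝ) ^ 2 ≥
      4 * (m : ℝ) ^ 2 / (n : ℝ)
      + (1 / 2) * ((d ⟨0, by omega⟩ : ℝ) - (d ⟨1, by omega⟩ : ℝ)) ^ 2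
      + (2 * (n : ℝ) / ((n : ℝ) - 2)) *
          (2 * (m : ℝ) / (n : ℝ)
            - ((d ⟨0, by omega⟩ : ℝ) + (d ⟨1, by omega⟩ : ℝ)) / 2) ^ 2 := by
  have hcard : Fintype.card V = n := by simpa using (Fintype.card_congr e).symm
  have hsum : ∑ v : V, (G.degree v : ℝ) = 2 * m := by
    rw [hm]
    exact_mod_cast G.sum_degrees_eq_twice_card_edges
  have hne : e ⟨0, by omega⟩ ≠ e ⟨1, by omega⟩ := e.injective.ne (by simp)
  have key := sq_sum_div_card_add_le_sum_sq (fun v => (G.degree v : ℝ)) hne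
  rw [hsum, hcard, ← hd, ← hd] at key
  exact le_of_eq_of_le (by ring) key
end

section
/- Let G be a simple graph on n ≥ 4 vertices with all degrees positive and α real. Then for any three distinct vertices with degrees d_j, d_k, d_ℓ: Z_{2α}(G) ≥ d_ℓ^{2α} + (Z_α(G) − d_ℓ^α)²/(n−1) + (1/2)(d_j^α − d_k^α)² + (2(n−1)/(n−3))·((Z_α(G) − d_ℓ^α)/(n−1) − (d_j^α + d_k^α)/2)². -/
/-!
Write `x_v = d_v ^ α`, so that `d_v ^ (2α) = x_v ^ 2`. Discarding `x_l`, the remaining `n - 1`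
values split into `x_j`, `x_k` and the `n - 3` others, whose sum of squares is at least
`t² / (n - 3)` by Cauchy–Schwarz (`t` their sum). The right-hand side is exactly
`x_j² + x_k² + t² / (n - 3)`: it is the squared norm of `(x_j, x_k, t/(n-3), …, t/(n-3))`,
split into its projections onto the all-ones vector, onto `e_j - e_k`, and onto the
remaining direction of the span of `e_j`, `e_k` and the indicator of the others.
-/

open Finset

lemma div_add_sq_div_two_add_mul_sq_le (a b t q m : ℝ) (hm : 0 ≤ m) (hq : 0 ≤ q)
    (ht : t ^ 2 ≤ m * q) :
    (a + b + t) ^ 2 / (m + 2) + (a - b) ^ 2 / 2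
        + 2 * (m + 2) / m * ((a + b + t) / (m + 2) - (a + b) / 2) ^ 2
      ≤ a ^ 2 + b ^ 2 + q := by
  rcases hm.eq_or_lt with rfl | hm
  · obtain rfl : t = 0 := by nlinarith [sq_nonneg t]
    have hsplit : (a + b) ^ 2 / 2 + (a - b) ^ 2 / 2 = a ^ 2 + b ^ 2 := by ring
    simpa [hsplit] using hq
  · have hdecomp : (a + b + t) ^ 2 / (m + 2) + (a - b) ^ 2 / 2
          + 2 * (m + 2) / m * ((a + b + t) / (m + 2) - (a + b) / 2) ^ 2
        = a ^ 2 + b ^ 2 + t ^ 2 / m := by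
      field_simp
      ring
    have htq : t ^ 2 / m ≤ q := by rwa [div_le_iff₀ hm, mul_comm]
    linarith

lemma sq_sum_div_card_add_le_sum_sq_s8 {ι : Type*} [DecidableEq ι] (s : Finset ι) (f : ι → ℝ)
    {j k : ι} (hj : j ∈ s) (hk : k ∈ s) (hjk : j ≠ k) :
    (∑ i ∈ s, f i) ^ 2 / #s + (f j - f k) ^ 2 / 2
        + 2 * #s / (#s - 2) * ((∑ i ∈ s, f i) / #s - (f j + f k) / 2) ^ 2
      ≤ ∑ i ∈ s, f i ^ 2 := by
  set u := (s.erase j).erase k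
  have hk' : k ∈ s.erase j := mem_erase.2 ⟨hjk.symm, hk⟩
  have hsum (g : ι → ℝ) : ∑ i ∈ s, g i = g j + g k + ∑ i ∈ u, g i := by
    rw [← add_sum_erase s g hj, ← add_sum_erase _ g hk', add_assoc]
  have hcard : (#s : ℝ) = #u + 2 := by
    have hs : 1 < #s := one_lt_card.2 ⟨j, hj, k, hk, hjk⟩
    have : #s = #u + 2 := by
      rw [card_erase_of_mem hk', card_erase_of_mem hj]
      omega
    exact_mod_cast this
  rw [hsum f, hsum (f · ^ 2), hcard, add_sub_cancel_right]
  exact div_add_sq_div_two_add_mul_sq_le _ _ _ _ _ (Nat.cast_nonneg _)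
    (sum_nonneg fun i _ => sq_nonneg (f i)) (sq_sum_le_card_mul_sum_sq)

theorem stmt8_general {V : Type*} [Fintype V] (G : SimpleGraph V)
    [DecidableRel G.Adj] (α : ℝ) (j k l : V)
    (hjk : j ≠ k) (hjl : j ≠ l) (hkl : k ≠ l) :
    ∑ v : V, (G.degree v : ℝ) ^ (2 * α) ≥
      (G.degree l : ℝ) ^ (2 * α)
      + ((∑ v : V, (G.degree v : ℝ) ^ α) - (G.degree l : ℝ) ^ α) ^ 2
          / ((Fintype.card V : ℝ) - 1)
      + (1 / 2) * ((G.degree j : ℝ) ^ α - (G.degree k : ℝ) ^ α) ^ 2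
      + (2 * ((Fintype.card V : ℝ) - 1) / ((Fintype.card V : ℝ) - 3)) *
          (((∑ v : V, (G.degree v : ℝ) ^ α) - (G.degree l : ℝ) ^ α)
              / ((Fintype.card V : ℝ) - 1)
            - ((G.degree j : ℝ) ^ α + (G.degree k : ℝ) ^ α) / 2) ^ 2 := by
  classical
  set x : V → ℝ := fun v => (G.degree v : ℝ) ^ α
  have hsq (v : V) : (G.degree v : ℝ) ^ (2 * α) = x v ^ 2 := by
    rw [mul_comm, Real.rpow_mul (Nat.cast_nonneg _), Real.rpow_two]
  have hsum (g : V → ℝ) : ∑ v, g v = g l + ∑ v ∈ univ.erase l, g v :=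
    (add_sum_erase _ g (mem_univ l)).symm
  have hcard : (#(univ.erase l) : ℝ) = Fintype.card V - 1 := by
    rw [card_erase_of_mem (mem_univ l), card_univ,
      Nat.cast_sub (Fintype.card_pos_iff.2 ⟨l⟩), Nat.cast_one]
  have key := sq_sum_div_card_add_le_sum_sq_s8 (univ.erase l) x
    (mem_erase.2 ⟨hjl, mem_univ j⟩) (mem_erase.2 ⟨hkl, mem_univ k⟩) hjk
  rw [hcard, sub_sub, show (1 : ℝ) + 2 = 3 by norm_num] at key
  simp_rw [hsq]
  rw [hsum (x · ^ 2), hsum x, add_sub_cancel_left]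
  linarith

theorem stmt8 {V : Type*} [Fintype V] [DecidableEq V] (G : SimpleGraph V)
    [DecidableRel G.Adj] (hn : 4 ≤ Fintype.card V)
    (hdeg : ∀ v : V, 0 < G.degree v) (α : ℝ) (j k l : V)
    (hjk : j ≠ k) (hjl : j ≠ l) (hkl : k ≠ l) :
    ∑ v : V, (G.degree v : ℝ) ^ (2 * α) ≥
      (G.degree l : ℝ) ^ (2 * α)
      + ((∑ v : V, (G.degree v : ℝ) ^ α) - (G.degree l : ℝ) ^ α) ^ 2
          / ((Fintype.card V : ℝ) - 1)
      + (1 / 2) * ((G.degree j : ℝ) ^ α - (G.degree k : ℝ) ^ α) ^ 2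
      + (2 * ((Fintype.card V : ℝ) - 1) / ((Fintype.card V : ℝ) - 3)) *
          (((∑ v : V, (G.degree v : ℝ) ^ α) - (G.degree l : ℝ) ^ α)
              / ((Fintype.card V : ℝ) - 1)
            - ((G.degree j : ℝ) ^ α + (G.degree k : ℝ) ^ α) / 2) ^ 2 :=
  stmt8_general G α j k l hjk hjl hkl
end
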